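/- Let p : F → E be a connected covering of directed graphs and v ∈ F⁰. Then the number of sheets of the covering, i.e., the cardinality of each vertex fibre p⁻¹(u) for u ∈ E⁰, equals the index of p∗π₁(F, v) in π₁(E, p(v)). -/

import Mathlib

/-- A directed graph `E = (E⁰, E¹, r, s)`. -/
structure Digraph' : Type 1 where
  V : Type
  E : Type
  r : E → V
  s : E → V

namespace Digraph'

/-- A step in a walk: an edge traversed forwards (`true`) or backwards (`false`). -/
abbrev Step (X : Digraph') : Type := X.E × Bool

def stepSrc (X : Digraph') (p : X.Step) : X.V := if p.2 then X.s p.1 else X.r p.1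

def stepTgt (X : Digraph') (p : X.Step) : X.V := if p.2 then X.r p.1 else X.s p.1

/-- `X.IsWalk u v l`: `l` is a walk from `u` to `v`. -/
def IsWalk (X : Digraph') : X.V → X.V → List X.Step → Prop
  | u, v, [] => u = v
  | u, v, p :: l => X.stepSrc p = u ∧ X.IsWalk (X.stepTgt p) v l

/-- A walk is reduced if it contains no subwalk `e e⁻¹` or `e⁻¹ e`. -/
def Reduced (X : Digraph') (l : List X.Step) : Prop :=
  List.Chain' (fun p q => ¬(p.1 = q.1 ∧ p.2 = !q.2)) l

/-- The reverse of a walk, traversing it backwards and inverting each edge. -/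
def winv (X : Digraph') (l : List X.Step) : List X.Step :=
  (l.map fun p => (p.1, !p.2)).reverse

open Classical in
/-- The reduction of a walk: repeatedly delete adjacent pairs `e e⁻¹`, `e⁻¹ e`. -/
noncomputable def red (X : Digraph') : List X.Step → List X.Step
  | [] => []
  | p :: l =>
    match X.red l with
    | [] => [p]
    | q :: m => if p.1 = q.1 ∧ p.2 = !q.2 then m else p :: q :: m

/-- The reduced loops in `X` based at `u`; the carrier of `π₁(X, u)`. -/
abbrev Loop (X : Digraph') (u : X.V) : Type :=
  {l : List X.Step // X.IsWalk u u l ∧ X.Reduced l}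

/-- `X` is connected: there is a walk between any two vertices. -/
def Connected (X : Digraph') : Prop := ∀ u v : X.V, ∃ l, X.IsWalk u v l

end Digraph'

/-- A morphism of directed graphs. -/
structure Digraph'.Hom (F E : Digraph') where
  vmap : F.V → E.V
  emap : F.E → E.E
  hr : ∀ e, E.r (emap e) = vmap (F.r e)
  hs : ∀ e, E.s (emap e) = vmap (F.s e)

/-- The action of a graph morphism on walks. -/
def Digraph'.Hom.wmap {F E : Digraph'} (p : Digraph'.Hom F E) (l : List F.Step) :
    List E.Step :=
  l.map fun q => (p.emap q.1, q.2)

/-- A covering of directed graphs: a surjective morphism restricting to bijections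
on incoming and outgoing edge sets at each vertex. -/
structure Digraph'.IsCovering {F E : Digraph'} (p : Digraph'.Hom F E) : Prop where
  vsurj : Function.Surjective p.vmap
  esurj : Function.Surjective p.emap
  rbij : ∀ v : F.V, Set.BijOn p.emap {e | F.r e = v} {e | E.r e = p.vmap v}
  sbij : ∀ v : F.V, Set.BijOn p.emap {e | F.s e = v} {e | E.s e = p.vmap v}

open Digraph'

/-!
Choose for every vertex `w` of `F` a walk `α w` from `v` to `w`. Sending `w` in the fibre over
`p w₀` to the coset of the loop `p(α w₀) · p(α w)⁻¹` is a bijection onto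
`π₁(E, p v) ⧸ p₊π₁(F, v)`. Since `p` is injective on the edges at each vertex, lifts of
walks are unique and reduction commutes with `p`; so the reduction of a walk of `E`
determines the endpoint of its lift from `v`, which gives injectivity. Surjectivity holds
because every walk of `E` lifts.
-/

namespace Digraph'

variable {X : Digraph'}

open Classical in
noncomputable def cancelCons (X : Digraph') (p : X.Step) : List X.Step → List X.Step
  | [] => [p]
  | q :: m => if p.1 = q.1 ∧ p.2 = !q.2 then m else p :: q :: m

lemma red_cons (p : X.Step) (l : List X.Step) : X.red (p :: l) = X.cancelCons p (X.red l) := by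
  cases h : X.red l <;> (unfold red; rw [h]; rfl)

open Classical in
lemma cancelCons_cons (p q : X.Step) (m : List X.Step) :
    X.cancelCons p (q :: m) = if p.1 = q.1 ∧ p.2 = !q.2 then m else p :: q :: m := rfl

lemma stepSrc_flip (q : X.Step) : X.stepSrc (q.1, !q.2) = X.stepTgt q := by
  obtain ⟨e, b⟩ := q
  cases b <;> rfl

lemma stepTgt_flip (q : X.Step) : X.stepTgt (q.1, !q.2) = X.stepSrc q := by
  obtain ⟨e, b⟩ := q
  cases b <;> rfl

lemma reduced_red (l : List X.Step) : X.Reduced (X.red l) := by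
  induction l with
  | nil => exact List.isChain_nil
  | cons p l ih =>
    rw [red_cons]
    cases h : X.red l with
    | nil => exact List.isChain_singleton p
    | cons q m =>
      rw [h] at ih
      rw [cancelCons_cons]
      split_ifs with hc
      · exact ih.tail
      · exact List.isChain_cons_cons.mpr ⟨hc, ih⟩

lemma red_eq_self {l : List X.Step} (h : X.Reduced l) : X.red l = l := by
  induction l with
  | nil => rfl
  | cons p l ih =>
    rw [red_cons, ih h.tail]
    cases l with
    | nil => rfl
    | cons q m => rw [cancelCons_cons, if_neg (List.isChain_cons_cons.mp h).1]

lemma winv_cons (p : X.Step) (l : List X.Step) :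
    X.winv (p :: l) = X.winv l ++ [(p.1, !p.2)] := by
  simp [winv]

namespace IsWalk

variable {l m : List X.Step} {u v w : X.V}

lemma append (hl : X.IsWalk u v l) (hm : X.IsWalk v w m) : X.IsWalk u w (l ++ m) := by
  induction l generalizing u with
  | nil => cases hl; exact hm
  | cons p l ih => exact ⟨hl.1, ih hl.2⟩

lemma target_eq (hv : X.IsWalk u v l) (hw : X.IsWalk u w l) : v = w := by
  induction l generalizing u with
  | nil => exact hv.symm.trans hw
  | cons p l ih => exact ih hv.2 hw.2

protected lemma red (h : X.IsWalk u v l) : X.IsWalk u v (X.red l) := by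
  induction l generalizing u with
  | nil => exact h
  | cons p l ih =>
    obtain ⟨hp, hl⟩ := h
    have hred := ih hl
    rw [red_cons]
    cases h' : X.red l with
    | nil => rw [h'] at hred; exact ⟨hp, hred⟩
    | cons q m =>
      rw [h'] at hred
      rw [cancelCons_cons]
      split_ifs with hc
      · have hq : q = (p.1, !p.2) := Prod.ext hc.1.symm (by rw [hc.2, Bool.not_not])
        rw [hq] at hred
        have hm := hred.2
        rwa [stepTgt_flip, hp] at hm
      · exact ⟨hp, hred⟩

protected lemma winv (h : X.IsWalk u v l) : X.IsWalk v u (X.winv l) := by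
  induction l generalizing u with
  | nil => exact h.symm
  | cons p l ih =>
    rw [winv_cons]
    exact (ih h.2).append ⟨stepSrc_flip p, (stepTgt_flip p).trans h.1⟩

end IsWalk

lemma winv_append (l m : List X.Step) : X.winv (l ++ m) = X.winv m ++ X.winv l := by
  simp [winv]

lemma winv_winv (l : List X.Step) : X.winv (X.winv l) = l := by
  simp [winv, Function.comp_def]

lemma red_append_red (l m : List X.Step) : X.red (l ++ X.red m) = X.red (l ++ m) := by
  induction l with
  | nil => exact red_eq_self (reduced_red m)
  | cons p l ih => simp only [List.cons_append, red_cons, ih]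

lemma cancelCons_cancelCons {p q : X.Step} (hpq : p.1 = q.1 ∧ p.2 = !q.2) {l : List X.Step}
    (hl : X.Reduced l) : X.cancelCons p (X.cancelCons q l) = l := by
  have hp : p = (q.1, !q.2) := Prod.ext hpq.1 hpq.2
  subst hp
  cases l with
  | nil => simp [cancelCons]
  | cons r l =>
    by_cases hqr : q.1 = r.1 ∧ q.2 = !r.2
    · have hr : r = (q.1, !q.2) := Prod.ext hqr.1.symm (by rw [hqr.2, Bool.not_not])
      subst hr
      rw [cancelCons_cons, if_pos hqr]
      cases l with
      | nil => rfl
      | cons s l => rw [cancelCons_cons, if_neg (List.isChain_cons_cons.mp hl).1]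
    · rw [cancelCons_cons, if_neg hqr, cancelCons_cons, if_pos hpq]

lemma red_red_append (l m : List X.Step) : X.red (X.red l ++ m) = X.red (l ++ m) := by
  induction l with
  | nil => rfl
  | cons p l ih =>
    rw [List.cons_append, red_cons, red_cons, ← ih]
    cases h : X.red l with
    | nil => rfl
    | cons q m' =>
      rw [cancelCons_cons]
      split_ifs with hc
      · rw [List.cons_append, red_cons, cancelCons_cancelCons hc (reduced_red _)]
      · rfl

lemma red_append_winv_append (l k : List X.Step) : X.red (l ++ (X.winv l ++ k)) = X.red k := by
  induction l generalizing k with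
  | nil => rfl
  | cons p l ih =>
    have hsplit : p :: l ++ (X.winv (p :: l) ++ k) =
        p :: (l ++ (X.winv l ++ (p.1, !p.2) :: k)) := by
      simp [winv_cons]
    rw [hsplit, red_cons, ih, red_cons]
    exact cancelCons_cancelCons (p := p) (q := (p.1, !p.2)) ⟨rfl, (Bool.not_not p.2).symm⟩
      (reduced_red k)

lemma red_append_winv_append_append (a b c : List X.Step) :
    X.red (a ++ (X.winv b ++ (b ++ c))) = X.red (a ++ c) := by
  have h := red_append_winv_append (X.winv b) c
  rw [winv_winv] at h
  rw [← red_append_red, h, red_append_red]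

namespace Loop

variable {u : X.V} {l m : List X.Step}

noncomputable def ofWalk (l : List X.Step) (h : X.IsWalk u u l) : X.Loop u :=
  ⟨X.red l, h.red, reduced_red l⟩

lemma val_ofWalk (h : X.IsWalk u u l) : (ofWalk l h).val = X.red l := rfl

lemma ofWalk_val (a : X.Loop u) : ofWalk a.val a.2.1 = a := Subtype.ext (red_eq_self a.2.2)

lemma ofWalk_congr {hl : X.IsWalk u u l} {hm : X.IsWalk u u m} (h : X.red l = X.red m) :
    ofWalk l hl = ofWalk m hm :=
  Subtype.ext h

variable [Group (X.Loop u)]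

lemma ofWalk_mul_ofWalk (hmul : ∀ a b : X.Loop u, (a * b).val = X.red (a.val ++ b.val))
    (hl : X.IsWalk u u l) (hm : X.IsWalk u u m) :
    ofWalk l hl * ofWalk m hm = ofWalk (l ++ m) (hl.append hm) :=
  Subtype.ext (by rw [hmul]; exact (red_red_append _ _).trans (red_append_red _ _))

lemma ofWalk_nil (hmul : ∀ a b : X.Loop u, (a * b).val = X.red (a.val ++ b.val)) :
    ofWalk [] rfl = (1 : X.Loop u) :=
  mul_eq_left.mp (ofWalk_mul_ofWalk hmul (l := []) (m := []) rfl rfl)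

lemma inv_ofWalk (hmul : ∀ a b : X.Loop u, (a * b).val = X.red (a.val ++ b.val))
    (h : X.IsWalk u u l) : (ofWalk l h)⁻¹ = ofWalk (X.winv l) h.winv := by
  refine inv_eq_of_mul_eq_one_right ?_
  rw [ofWalk_mul_ofWalk hmul, ← ofWalk_nil hmul]
  exact ofWalk_congr (by simpa using red_append_winv_append l [])

end Loop

variable {F E : Digraph'} {p : Hom F E}

lemma Hom.wmap_cons (q : F.Step) (l : List F.Step) :
    p.wmap (q :: l) = (p.emap q.1, q.2) :: p.wmap l := rfl

lemma Hom.wmap_append (l m : List F.Step) : p.wmap (l ++ m) = p.wmap l ++ p.wmap m := by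
  simp [Hom.wmap]

lemma Hom.wmap_winv (l : List F.Step) : p.wmap (F.winv l) = E.winv (p.wmap l) := by
  simp [Hom.wmap, winv, Function.comp_def]

lemma Hom.stepSrc_map (q : F.Step) : E.stepSrc (p.emap q.1, q.2) = p.vmap (F.stepSrc q) := by
  obtain ⟨e, b⟩ := q
  cases b <;> simp [stepSrc, p.hr, p.hs]

lemma Hom.stepTgt_map (q : F.Step) : E.stepTgt (p.emap q.1, q.2) = p.vmap (F.stepTgt q) := by
  obtain ⟨e, b⟩ := q
  cases b <;> simp [stepTgt, p.hr, p.hs]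

lemma IsWalk.wmap {l : List F.Step} {u w : F.V} (h : F.IsWalk u w l) (p : Hom F E) :
    E.IsWalk (p.vmap u) (p.vmap w) (p.wmap l) := by
  induction l generalizing u with
  | nil => exact congrArg p.vmap h
  | cons q l ih => exact ⟨(Hom.stepSrc_map q).trans (congrArg p.vmap h.1),
      (Hom.stepTgt_map q).symm ▸ ih h.2⟩

namespace IsCovering

lemma exists_lift_step (hp : IsCovering p) {w : F.V} {q : E.Step}
    (hq : E.stepSrc q = p.vmap w) :
    ∃ q' : F.Step, F.stepSrc q' = w ∧ (p.emap q'.1, q'.2) = q := by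
  obtain ⟨e, b⟩ := q
  cases b with
  | true =>
    obtain ⟨e', he', rfl⟩ := (hp.sbij w).surjOn (show E.s e = p.vmap w from hq)
    exact ⟨(e', true), he', rfl⟩
  | false =>
    obtain ⟨e', he', rfl⟩ := (hp.rbij w).surjOn (show E.r e = p.vmap w from hq)
    exact ⟨(e', false), he', rfl⟩

lemma step_eq_of_map_eq (hp : IsCovering p) {a b : F.Step} (h : F.stepSrc a = F.stepSrc b)
    (hab : (p.emap a.1, a.2) = (p.emap b.1, b.2)) : a = b := by
  obtain ⟨e₁, b₁⟩ := a
  obtain ⟨e₂, b₂⟩ := b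
  obtain ⟨he, rfl⟩ := Prod.mk.inj hab
  cases b₁
  · rw [(hp.rbij (F.r e₁)).injOn rfl (show F.r e₂ = F.r e₁ from h.symm) he]
  · rw [(hp.sbij (F.s e₁)).injOn rfl (show F.s e₂ = F.s e₁ from h.symm) he]

lemma fst_eq_of_map_cancel (hp : IsCovering p) {a b : F.Step} (h : F.stepTgt a = F.stepSrc b)
    (he : p.emap a.1 = p.emap b.1) (hb : a.2 = !b.2) : a.1 = b.1 :=
  show (a.1, !a.2).1 = b.1 from congrArg Prod.fst <|
    hp.step_eq_of_map_eq (by rw [stepSrc_flip, h]) (by rw [he, hb, Bool.not_not])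

lemma wmap_red (hp : IsCovering p) {l : List F.Step} {u w : F.V} (h : F.IsWalk u w l) :
    p.wmap (F.red l) = E.red (p.wmap l) := by
  induction l generalizing u with
  | nil => rfl
  | cons q l ih =>
    have hred := h.2.red
    rw [Hom.wmap_cons, red_cons, red_cons, ← ih h.2]
    cases h' : F.red l with
    | nil => rfl
    | cons r m =>
      rw [h'] at hred
      by_cases hc : q.1 = r.1 ∧ q.2 = !r.2
      · rw [cancelCons_cons, if_pos hc, Hom.wmap_cons, cancelCons_cons,
          if_pos ⟨congrArg p.emap hc.1, hc.2⟩]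
      · have hc' : ¬(p.emap q.1 = p.emap r.1 ∧ q.2 = !r.2) := fun ⟨h₁, h₂⟩ =>
          hc ⟨hp.fst_eq_of_map_cancel hred.1.symm h₁ h₂, h₂⟩
        rw [cancelCons_cons, if_neg hc, Hom.wmap_cons, Hom.wmap_cons, cancelCons_cons,
          if_neg hc']

lemma exists_lift (hp : IsCovering p) {l : List E.Step} {w : F.V} {u : E.V}
    (h : E.IsWalk (p.vmap w) u l) :
    ∃ (l' : List F.Step) (w' : F.V), F.IsWalk w w' l' ∧ p.wmap l' = l ∧ p.vmap w' = u := by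
  induction l generalizing w with
  | nil => exact ⟨[], w, rfl, rfl, h⟩
  | cons q l ih =>
    obtain ⟨q', hq', rfl⟩ := hp.exists_lift_step h.1
    obtain ⟨l', w', hl', rfl, hw'⟩ := ih (w := F.stepTgt q') ((Hom.stepTgt_map q') ▸ h.2)
    exact ⟨q' :: l', w', ⟨hq', hl'⟩, rfl, hw'⟩

lemma eq_of_wmap_eq (hp : IsCovering p) {l₁ l₂ : List F.Step} {w w₁ w₂ : F.V}
    (h₁ : F.IsWalk w w₁ l₁) (h₂ : F.IsWalk w w₂ l₂) (h : p.wmap l₁ = p.wmap l₂) : l₁ = l₂ := by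
  induction l₁ generalizing w l₂ with
  | nil => cases l₂ with
    | nil => rfl
    | cons _ _ => cases h
  | cons q l₁ ih =>
    cases l₂ with
    | nil => cases h
    | cons q₂ l₂ =>
      rw [Hom.wmap_cons, Hom.wmap_cons, List.cons.injEq] at h
      obtain rfl := hp.step_eq_of_map_eq (h₁.1.trans h₂.1.symm) h.1
      rw [ih h₁.2 h₂.2 h.2]

lemma target_eq_of_red_wmap_eq (hp : IsCovering p) {l₁ l₂ : List F.Step} {w w₁ w₂ : F.V}
    (h₁ : F.IsWalk w w₁ l₁) (h₂ : F.IsWalk w w₂ l₂)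
    (h : E.red (p.wmap l₁) = E.red (p.wmap l₂)) : w₁ = w₂ := by
  have hred : F.red l₁ = F.red l₂ :=
    hp.eq_of_wmap_eq h₁.red h₂.red (by rw [hp.wmap_red h₁, hp.wmap_red h₂, h])
  exact h₁.red.target_eq (hred ▸ h₂.red)

lemma map_ofWalk (hp : IsCovering p) {v : F.V} {f : F.Loop v → E.Loop (p.vmap v)}
    (hf : ∀ l : F.Loop v, (f l).val = p.wmap l.val) {l : List F.Step} (h : F.IsWalk v v l) :
    f (Loop.ofWalk l h) = Loop.ofWalk (p.wmap l) (h.wmap p) :=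
  Subtype.ext ((hf _).trans (hp.wmap_red h))

end IsCovering

section Sheets

variable {v : F.V} {α : F.V → List F.Step}

noncomputable def sheetLoop (hα : ∀ w, F.IsWalk v w (α w)) {w₀ : F.V}
    (w : {w : F.V // p.vmap w = p.vmap w₀}) : E.Loop (p.vmap v) :=
  Loop.ofWalk (p.wmap (α w₀) ++ E.winv (p.wmap (α w)))
    (((hα w₀).wmap p).append (IsWalk.winv (by have h := (hα w).wmap p; rwa [w.2] at h)))

variable [Group (F.Loop v)] [Group (E.Loop (p.vmap v))] {f : F.Loop v →* E.Loop (p.vmap v)}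

lemma sheetLoop_injective (hp : IsCovering p)
    (hmul : ∀ a b : E.Loop (p.vmap v), (a * b).val = E.red (a.val ++ b.val))
    (hf : ∀ l : F.Loop v, (f l).val = p.wmap l.val) (hα : ∀ w, F.IsWalk v w (α w)) (w₀ : F.V) :
    Function.Injective fun w : {w : F.V // p.vmap w = p.vmap w₀} =>
      (sheetLoop hα w : E.Loop (p.vmap v) ⧸ f.range) := by
  intro w w' h
  obtain ⟨c, hc⟩ := QuotientGroup.eq.mp h
  rw [sheetLoop, sheetLoop, Loop.inv_ofWalk hmul, Loop.ofWalk_mul_ofWalk hmul] at hc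
  have hcval : p.wmap c.val = E.red (p.wmap (α w) ++ E.winv (p.wmap (α w'))) := by
    rw [← hf, hc, Loop.val_ofWalk, winv_append, winv_winv, List.append_assoc,
      red_append_winv_append_append]
  refine Subtype.ext (hp.target_eq_of_red_wmap_eq (c.2.1.append (hα w')) (hα w) ?_).symm
  rw [Hom.wmap_append, hcval, red_red_append, List.append_assoc]
  simpa using red_append_winv_append_append (p.wmap (α w)) (p.wmap (α w')) []

lemma sheetLoop_surjective (hp : IsCovering p)
    (hmul : ∀ a b : E.Loop (p.vmap v), (a * b).val = E.red (a.val ++ b.val))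
    (hf : ∀ l : F.Loop v, (f l).val = p.wmap l.val) (hα : ∀ w, F.IsWalk v w (α w)) (w₀ : F.V) :
    Function.Surjective fun w : {w : F.V // p.vmap w = p.vmap w₀} =>
      (sheetLoop hα w : E.Loop (p.vmap v) ⧸ f.range) := by
  intro x
  obtain ⟨g, rfl⟩ := QuotientGroup.mk_surjective x
  obtain ⟨l, w, hl, hlmap, hw⟩ := hp.exists_lift (g.2.1.winv.append ((hα w₀).wmap p))
  refine ⟨⟨w, hw⟩, (QuotientGroup.eq.mpr <| f.mem_range.mpr
    ⟨Loop.ofWalk _ (hl.append (hα w).winv), ?_⟩).symm⟩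
  rw [hp.map_ofWalk hf, ← Loop.ofWalk_val g, sheetLoop, Loop.inv_ofWalk hmul,
    Loop.ofWalk_mul_ofWalk hmul]
  refine Loop.ofWalk_congr ?_
  rw [Hom.wmap_append, Hom.wmap_winv, hlmap, List.append_assoc]

end Sheets

end Digraph'

theorem number_of_sheets_eq_index_general {F E : Digraph'} (p : Digraph'.Hom F E)
    (hp : Digraph'.IsCovering p) (hconn : F.Connected) (v : F.V)
    [GF : Group (F.Loop v)]
    [GE : Group (E.Loop (p.vmap v))]
    (hGE : ∀ a b : E.Loop (p.vmap v), (a * b).val = E.red (a.val ++ b.val))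
    (f : F.Loop v →* E.Loop (p.vmap v))
    (hf : ∀ l : F.Loop v, (f l).val = p.wmap l.val) :
    ∀ u : E.V,
      Cardinal.mk {w : F.V // p.vmap w = u} =
        Cardinal.mk (E.Loop (p.vmap v) ⧸ f.range) := by
  intro u
  obtain ⟨w₀, rfl⟩ := hp.vsurj u
  choose α hα using hconn v
  exact Cardinal.mk_congr (Equiv.ofBijective _
    ⟨sheetLoop_injective hp hGE hf hα w₀, sheetLoop_surjective hp hGE hf hα w₀⟩)

/-- the number of sheets of a connected covering, i.e. the cardinality of
each vertex fibre `p⁻¹(u)`, equals the index of `p₊π₁(F, v)` in `π₁(E, p(v))`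
(the cardinality of the coset space). -/
theorem number_of_sheets_eq_index {F E : Digraph'} (p : Digraph'.Hom F E)
    (hp : Digraph'.IsCovering p) (hconn : F.Connected) (v : F.V)
    [GF : Group (F.Loop v)]
    (hGF : ∀ a b : F.Loop v, (a * b).val = F.red (a.val ++ b.val))
    [GE : Group (E.Loop (p.vmap v))]
    (hGE : ∀ a b : E.Loop (p.vmap v), (a * b).val = E.red (a.val ++ b.val))
    (f : F.Loop v →* E.Loop (p.vmap v))
    (hf : ∀ l : F.Loop v, (f l).val = p.wmap l.val) :
    ∀ u : E.V,
      Cardinal.mk {w : F.V // p.vmap w = u} =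
        Cardinal.mk (E.Loop (p.vmap v) ⧸ f.range) :=
  number_of_sheets_eq_index_general p hp hconn v (GF := GF) (GE := GE) hGE f hf
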